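/- If z is a unit of R, then for every m ≥ 1 the code R(1,m) has exactly 64^{m+1} elements; equivalently, the map (a₁,…,a_{m+1}) ↦ a₁g₁+⋯+a_{m+1}g_{m+1} from R^{m+1} to R^{2^m} is injective, where g₁,…,g_{m+1} are the rows of G_{1,m}. -/

import Mathlib

open Polynomial

noncomputable section

/-- The ring `R = ℤ₄[u]/(u³ − 1)`. -/
abbrev R : Type := Polynomial (ZMod 4) ⧸ Ideal.span ({Polynomial.X ^ 3 - 1} : Set (Polynomial (ZMod 4)))

/-- The image `u` of the variable in `R`. -/
def u : R := Ideal.Quotient.mk _ Polynomial.X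

instance : DecidableEq R := Classical.decEq R

lemma u_pow_three : u ^ 3 = 1 := by
  have h : (Ideal.Quotient.mk (Ideal.span ({Polynomial.X ^ 3 - 1} : Set (Polynomial (ZMod 4))))
      (Polynomial.X ^ 3 - 1) : R) = 0 :=
    Ideal.Quotient.eq_zero_iff_mem.mpr (Ideal.subset_span rfl)
  have h2 : (u ^ 3 - 1 : R) = 0 := by
    simpa [u, map_sub, map_pow] using h
  linear_combination h2

/-- The ring automorphism `σ` of `R` determined by `σ(u) = u²`. -/
def sigmaR : R →+* R :=
  Ideal.Quotient.lift _ (Polynomial.aeval (u ^ 2)).toRingHom (by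
    intro p hp
    obtain ⟨q, rfl⟩ := Ideal.mem_span_singleton.mp hp
    have h6 : ((u ^ 2) ^ 3 : R) = 1 := by
      rw [← pow_mul]
      have : (u : R) ^ (2 * 3) = (u ^ 3) ^ 2 := by ring
      rw [this, u_pow_three, one_pow]
    simp [map_mul, map_sub, map_pow, h6])

/-- The element `δ = 2 + 2u + 2u²` of `R`. -/
def δR : R := 2 + 2 * u + 2 * u ^ 2

/-- The map `ρ : Rⁿ → Rⁿ`, reversing coordinates and applying `σ` coordinatewise. -/
def ρmap (n : ℕ) (x : Fin n → R) : Fin n → R := fun i => sigmaR (x (Fin.rev i))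

/-- The 4-letter DNA alphabet. -/
inductive DNA : Type
  | A | C | G | T
deriving DecidableEq, Inhabited, Repr

/-- Watson–Crick complement of a DNA nucleotide. -/
def DNA.compl : DNA → DNA
  | .A => .T
  | .T => .A
  | .C => .G
  | .G => .C

/-- Complement of a DNA string. -/
def complStr (s : List DNA) : List DNA := s.map DNA.compl

/-- Reverse of a DNA string. -/
def revStr (s : List DNA) : List DNA := s.reverse

/-- Reverse-complement of a DNA string. -/
def rcStr (s : List DNA) : List DNA := s.reverse.map DNA.compl

/-- Hamming distance between two DNA strings (of equal length). -/
def dH (s t : List DNA) : ℕ := ((s.zip t).filter fun p => p.1 ≠ p.2).length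

/-- GC-content of a DNA string: the number of positions carrying `G` or `C`. -/
def gcContent (s : List DNA) : ℕ := (s.filter fun d => d = DNA.G ∨ d = DNA.C).length

/-- A DNA string has no homopolymer run of length greater than `2` iff it has no three
consecutive equal symbols. -/
def NoHomopolymer3 (s : List DNA) : Prop := ¬ ∃ (l r : List DNA) (a : DNA), s = l ++ [a, a, a] ++ r

/-- Blockwise extension of a map `ψ : R → Σ³` to vectors over `R`, by concatenation. -/
def Ψ (ψ : R → List DNA) {n : ℕ} (x : Fin n → R) : List DNA := (List.ofFn x).flatMap ψ

/-- The map `ψ₂` from the ideal `2R` to DNA strings of length `3`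
(the restriction of the DNA map of Table I to `2R`; its value outside `2R` is irrelevant). -/
def ψ₂ (x : R) : List DNA :=
  if x = 0 then [.G, .A, .G]
  else if x = 2 then [.C, .G, .A]
  else if x = 2 * u then [.G, .T, .G]
  else if x = 2 * u ^ 2 then [.A, .G, .C]
  else if x = 2 + 2 * u then [.T, .C, .G]
  else if x = 2 + 2 * u ^ 2 then [.C, .A, .C]
  else if x = 2 * u + 2 * u ^ 2 then [.G, .C, .T]
  else [.C, .T, .C]

/-- The rows of the Reed–Muller type generator matrix `G_{1,m}` over `R` (with parameter `z`):
`Gmat z m i j` is the entry of `G_{1,m}` in row `i` and column `j`.  Here `G_{1,0} = [z]` and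
`G_{1,m+1} = [[G_{1,m}, G_{1,m}], [0 … 0, z … z]]`, which for `m = 1` gives
`G_{1,1} = [[z,z],[0,z]]`. -/
def Gmat (z : R) : (m : ℕ) → Fin (m + 1) → Fin (2 ^ m) → R
  | 0, _, _ => z
  | m + 1, i, j =>
    if hi : (i : ℕ) < m + 1 then
      Gmat z m ⟨i, hi⟩ ⟨(j : ℕ) % 2 ^ m, Nat.mod_lt _ (Nat.two_pow_pos m)⟩
    else if (j : ℕ) < 2 ^ m then 0 else z

/-- The Reed–Muller type code `R(1,m)`: the `R`-submodule of `R^{2^m}` generated by the rows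
of `G_{1,m}`. -/
def RM (z : R) (m : ℕ) : Submodule R (Fin (2 ^ m) → R) := Submodule.span R (Set.range (Gmat z m))

/-- Hamming weight of a vector over `R`. -/
def wt {N : ℕ} (c : Fin N → R) : ℕ := (Finset.univ.filter fun j => c j ≠ 0).card

/-- Hamming distance between two vectors over `R`. -/
def hdistR {N : ℕ} (c c' : Fin N → R) : ℕ := (Finset.univ.filter fun j => c j ≠ c' j).card

/-- Coordinate reversal of a vector over `R`. -/
def revVec {N : ℕ} (c : Fin N → R) : Fin N → R := fun j => c (Fin.rev j)

/-- `a + bu + cu²` as an element of `R`, for `a, b, c ∈ ℤ₄`. -/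
def toR (a b c : ZMod 4) : R :=
  algebraMap (ZMod 4) R a + algebraMap (ZMod 4) R b * u + algebraMap (ZMod 4) R c * u ^ 2

end

/-!
On the first half of the columns the last row of `G_{1,n+1}` vanishes and the other rows are
those of `G_{1,n}`; so, by induction on `n`, a vanishing combination of the rows has its first
`n + 1` coefficients equal to zero, and column `2 ^ n` then reads `a_{n+2} z = 0`. Thus the rows
are linearly independent when `z` is a unit, and `R(1,m) ≅ R^{m+1}` with `|R| = 4³`.
-/

theorem Polynomial.natCard_quotient_span_of_monic {K : Type*} [CommRing K] {f : K[X]}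
    (hf : f.Monic) : Nat.card (K[X] ⧸ Ideal.span {f}) = Nat.card K ^ f.natDegree := by
  change Nat.card (AdjoinRoot f) = _
  rw [Nat.card_congr (AdjoinRoot.powerBasis' hf).basis.equivFun.toEquiv, Nat.card_fun,
    Nat.card_fin, AdjoinRoot.powerBasis'_dim]

theorem natCard_R : Nat.card R = 64 := by
  have hmonic : (X ^ 3 - 1 : (ZMod 4)[X]).Monic := by
    simpa using monic_X_pow_sub_C (1 : ZMod 4) three_ne_zero
  have hdeg : (X ^ 3 - 1 : (ZMod 4)[X]).natDegree = 3 := by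
    compute_degree!
  rw [Polynomial.natCard_quotient_span_of_monic hmonic, hdeg, Nat.card_zmod]
  norm_num

theorem Gmat_castSucc_succ (z : R) (n : ℕ) (i : Fin (n + 1)) (j : Fin (2 ^ (n + 1))) :
    Gmat z (n + 1) i.castSucc j = Gmat z n i ⟨j % 2 ^ n, Nat.mod_lt _ (Nat.two_pow_pos n)⟩ := by
  simp only [Gmat, Fin.val_castSucc, dif_pos i.isLt]

theorem Gmat_last_succ (z : R) (n : ℕ) (j : Fin (2 ^ (n + 1))) :
    Gmat z (n + 1) (Fin.last (n + 1)) j = if (j : ℕ) < 2 ^ n then 0 else z := by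
  simp [Gmat]

theorem sum_smul_Gmat_succ_apply (z : R) (n : ℕ) (a : Fin (n + 2) → R) (j : Fin (2 ^ (n + 1))) :
    (∑ i, a i • Gmat z (n + 1) i) j =
      (∑ i : Fin (n + 1), a i.castSucc • Gmat z n i)
          ⟨j % 2 ^ n, Nat.mod_lt _ (Nat.two_pow_pos n)⟩ +
        a (Fin.last (n + 1)) * if (j : ℕ) < 2 ^ n then 0 else z := by
  simp only [Finset.sum_apply, Fin.sum_univ_castSucc, Pi.smul_apply, smul_eq_mul,
    Gmat_castSucc_succ, Gmat_last_succ]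

theorem linearIndependent_Gmat {z : R} (hz : IsUnit z) (m : ℕ) :
    LinearIndependent R (Gmat z m) := by
  rw [Fintype.linearIndependent_iff]
  induction m with
  | zero =>
    intro a ha
    have h0 := congrFun ha 0
    simp only [Finset.sum_apply, Fin.sum_univ_succ, Fin.sum_univ_zero, Pi.smul_apply,
      smul_eq_mul, Gmat, Pi.zero_apply, add_zero] at h0
    exact Fin.forall_fin_one.mpr (hz.mul_left_eq_zero.mp h0)
  | succ n ih =>
    intro a ha
    have hinit : ∀ i : Fin (n + 1), a i.castSucc = 0 := by
      refine ih _ (funext fun j => ?_)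
      have hj := congrFun ha ⟨j, j.isLt.trans (Nat.pow_lt_pow_succ one_lt_two)⟩
      rw [sum_smul_Gmat_succ_apply] at hj
      simpa [Nat.mod_eq_of_lt j.isLt] using hj
    have hlast : a (Fin.last (n + 1)) = 0 := by
      have hj := congrFun ha ⟨2 ^ n, Nat.pow_lt_pow_succ one_lt_two⟩
      rw [sum_smul_Gmat_succ_apply] at hj
      refine hz.mul_left_eq_zero.mp ?_
      simpa [hinit] using hj
    exact Fin.lastCases hlast hinit

theorem stmt13_general (z : R) (hz : IsUnit z) (m : ℕ) :
    Nat.card (RM z m) = 64 ^ (m + 1) ∧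
    Function.Injective (fun a : Fin (m + 1) → R => ∑ i : Fin (m + 1), a i • Gmat z m i) := by
  have hli := linearIndependent_Gmat hz m
  constructor
  · rw [RM, Nat.card_congr (Module.Basis.span hli).equivFun.toEquiv, Nat.card_fun, Nat.card_fin,
      natCard_R]
  · exact linearIndependent_iff_injective_fintypeLinearCombination.mp hli

/-- If `z` is a unit of `R`, then for every `m ≥ 1` the code `R(1,m)` has exactly `64^{m+1}`
elements; equivalently, the linear-combination map `R^{m+1} → R^{2^m}` determined by the rows
of `G_{1,m}` is injective. -/
theorem stmt13 (z : R) (hz : IsUnit z) (m : ℕ) (hm : 1 ≤ m) :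
    Nat.card (RM z m) = 64 ^ (m + 1) ∧
    Function.Injective (fun a : Fin (m + 1) → R => ∑ i : Fin (m + 1), a i • Gmat z m i) :=
  stmt13_general z hz m
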